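/- Let X be a random vector in R^d and ε a centered real random variable independent of X having a Stein kernel τ. If E[‖εX‖_∞] + E[‖τ(ε)X^{⊗2}‖_∞] < ∞, then εX has a Stein kernel given by x ↦ E[τ(ε) X^{⊗2} | εX = x], where X^{⊗2} = (X_j X_k)_{j,k}. -/

import Mathlib

/-! Given `X = x`, the vector `εX = ε • x` is a function of `ε` alone, so the one-dimensional
Stein identity for `ε`, applied to `s ↦ h (s • x)`, gives
`E[ε ∑ⱼ xⱼ ∂ⱼh(εx)] = E[τ(ε) ∑ⱼₖ xⱼ xₖ ∂ₖ∂ⱼh(εx)]`. By independence the law of `(ε, X)` is a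
product, so integrating this identity in `x` against the law of `X` yields the Stein identity for
`εX` with the random matrix `τ(ε) X^{⊗2}` in place of a kernel. Since that matrix only ever
multiplies bounded functions of `εX`, it may be replaced by its conditional expectation given
`εX`, which is a function of `εX` read off the conditional distribution. -/

open MeasureTheory ProbabilityTheory

noncomputable section

/-- Partial derivative in direction `j`. -/
def pd {d : ℕ} (j : Fin d) (h : (Fin d → ℝ) → ℝ) : (Fin d → ℝ) → ℝ :=
  fun x => fderiv ℝ h x (Pi.single j 1)

/-- Iterated partial derivatives along a list of coordinates. -/
def pdList {d : ℕ} : List (Fin d) → ((Fin d → ℝ) → ℝ) → (Fin d → ℝ) → ℝ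
  | [], h => h
  | j :: js, h => pd j (pdList js h)

/-- Bounded `C^n` function with bounded partial derivatives up to order `n`. -/
def Cb {d : ℕ} (n : ℕ) (h : (Fin d → ℝ) → ℝ) : Prop :=
  ContDiff ℝ n h ∧
    ∀ js : List (Fin d), js.length ≤ n → ∃ C, ∀ x, |pdList js h x| ≤ C

/-- Multivariate Stein kernel. -/
def IsSteinKernel {Ω : Type*} [MeasurableSpace Ω] (μ : Measure Ω) {d : ℕ}
    (η : Ω → Fin d → ℝ) (τ : (Fin d → ℝ) → Fin d → Fin d → ℝ) : Prop :=
  Measurable τ ∧ Integrable (fun ω => ‖η ω‖) μ ∧ Integrable (fun ω => ‖τ (η ω)‖) μ ∧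
    ∀ h : (Fin d → ℝ) → ℝ, Cb 2 h →
      ∫ ω, ∑ j, (η ω j - ∫ ω', η ω' j ∂μ) * pd j h (η ω) ∂μ
        = ∫ ω, ∑ j, ∑ k, τ (η ω) j k * pd k (pd j h) (η ω) ∂μ

/-- One-dimensional Stein kernel: `E[(ε − E[ε]) h'(ε)] = E[τ(ε) h''(ε)]` for bounded `C²`
functions `h` with bounded derivatives. -/
def IsSteinKernel1 {Ω : Type*} [MeasurableSpace Ω] (μ : Measure Ω)
    (ε : Ω → ℝ) (τ : ℝ → ℝ) : Prop :=
  Measurable τ ∧ Integrable ε μ ∧ Integrable (fun ω => τ (ε ω)) μ ∧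
    ∀ h : ℝ → ℝ, (ContDiff ℝ 2 h ∧ (∃ C, ∀ x, |h x| ≤ C) ∧
        (∃ C, ∀ x, |deriv h x| ≤ C) ∧ (∃ C, ∀ x, |deriv (deriv h) x| ≤ C)) →
      ∫ ω, (ε ω - ∫ ω', ε ω' ∂μ) * deriv h (ε ω) ∂μ
        = ∫ ω, τ (ε ω) * deriv (deriv h) (ε ω) ∂μ

lemma exists_forall_abs_const_mul_le {α : Type*} {f : α → ℝ} (c : ℝ)
    (hf : ∃ C, ∀ a, |f a| ≤ C) : ∃ C, ∀ a, |c * f a| ≤ C := by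
  obtain ⟨C, hC⟩ := hf
  exact ⟨|c| * C, fun a => by
    rw [abs_mul]; exact mul_le_mul_of_nonneg_left (hC a) (abs_nonneg c)⟩

lemma exists_forall_abs_sum_le {ι α : Type*} (s : Finset ι) {f : ι → α → ℝ}
    (hf : ∀ i ∈ s, ∃ C, ∀ a, |f i a| ≤ C) : ∃ C, ∀ a, |∑ i ∈ s, f i a| ≤ C := by
  choose! C hC using hf
  exact ⟨∑ i ∈ s, C i, fun a =>
    (Finset.abs_sum_le_sum_abs _ _).trans (Finset.sum_le_sum fun i hi => hC i hi a)⟩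

lemma MeasureTheory.Integrable.mul_comp_of_abs_le {Ω E : Type*} [MeasurableSpace Ω]
    [MeasurableSpace E] {μ : Measure Ω} {f : Ω → ℝ} (hf : Integrable f μ) {η : Ω → E}
    (hη : Measurable η) {g : E → ℝ} (hg : Measurable g) {C : ℝ} (hgC : ∀ x, |g x| ≤ C) :
    Integrable (fun ω => f ω * g (η ω)) μ :=
  hf.mul_bdd (hg.comp hη).aestronglyMeasurable (ae_of_all _ fun ω => hgC (η ω))

section PartialDerivatives

variable {d : ℕ} {h : (Fin d → ℝ) → ℝ}

lemma fderiv_apply_eq_sum_pd (h : (Fin d → ℝ) → ℝ) (x v : Fin d → ℝ) :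
    fderiv ℝ h x v = ∑ j, v j * pd j h x := by
  conv_lhs => rw [← Finset.univ_sum_single v]
  simp only [map_sum, pd]
  refine Finset.sum_congr rfl fun j _ => ?_
  rw [← smul_eq_mul, ← ContinuousLinearMap.map_smul, ← Pi.single_smul, smul_eq_mul, mul_one]

lemma contDiff_pd {n : ℕ} (hh : ContDiff ℝ (n + 1) h) (j : Fin d) : ContDiff ℝ n (pd j h) :=
  (hh.fderiv_right le_rfl).clm_apply contDiff_const

lemma continuous_pd_pd (hh : ContDiff ℝ 2 h) (j k : Fin d) : Continuous (pd k (pd j h)) :=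
  (contDiff_pd (n := 0) (contDiff_pd (n := 1) hh j) k).continuous

lemma hasDerivAt_comp_smul (hh : Differentiable ℝ h) (x : Fin d → ℝ) (t : ℝ) :
    HasDerivAt (fun s : ℝ => h (s • x)) (∑ j, x j * pd j h (t • x)) t := by
  have hray := (hh (t • x)).hasFDerivAt.comp_hasDerivAt t ((hasDerivAt_id t).smul_const x)
  rwa [one_smul, fderiv_apply_eq_sum_pd] at hray

lemma deriv_comp_smul (hh : Differentiable ℝ h) (x : Fin d → ℝ) :
    deriv (fun s : ℝ => h (s • x)) = fun t => ∑ j, x j * pd j h (t • x) :=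
  funext fun t => (hasDerivAt_comp_smul hh x t).deriv

lemma deriv_deriv_comp_smul (hh : ContDiff ℝ 2 h) (x : Fin d → ℝ) :
    deriv (deriv fun s : ℝ => h (s • x))
      = fun t => ∑ j, ∑ k, x j * x k * pd k (pd j h) (t • x) := by
  rw [deriv_comp_smul (hh.differentiable two_ne_zero)]
  refine funext fun t => (HasDerivAt.fun_sum fun j _ =>
    (hasDerivAt_comp_smul ((contDiff_pd (n := 1) hh j).differentiable one_ne_zero) x t).const_mul
      (x j)).deriv.trans ?_
  simp only [Finset.mul_sum, mul_assoc]

namespace Cb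

lemma exists_abs_le {n : ℕ} (hh : Cb n h) : ∃ C, ∀ x, |h x| ≤ C :=
  hh.2 [] (Nat.zero_le n)

lemma exists_abs_pd_le {n : ℕ} (hh : Cb n h) (hn : 1 ≤ n) (j : Fin d) :
    ∃ C, ∀ x, |pd j h x| ≤ C :=
  hh.2 [j] hn

lemma exists_abs_pd_pd_le {n : ℕ} (hh : Cb n h) (hn : 2 ≤ n) (j k : Fin d) :
    ∃ C, ∀ x, |pd k (pd j h) x| ≤ C :=
  hh.2 [k, j] hn

end Cb

end PartialDerivatives

lemma IsSteinKernel1.integral_mul_sum_pd_smul {Ω : Type*} [MeasurableSpace Ω] {μ : Measure Ω}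
    {ε : Ω → ℝ} {τ : ℝ → ℝ} (hτ : IsSteinKernel1 μ ε τ) {d : ℕ} {h : (Fin d → ℝ) → ℝ}
    (hh : Cb 2 h) (x : Fin d → ℝ) :
    ∫ ω, (ε ω - ∫ ω', ε ω' ∂μ) * ∑ j, x j * pd j h (ε ω • x) ∂μ
      = ∫ ω, τ (ε ω) * ∑ j, ∑ k, x j * x k * pd k (pd j h) (ε ω • x) ∂μ := by
  have hdiff : Differentiable ℝ h := hh.1.differentiable two_ne_zero
  have hray : ContDiff ℝ 2 fun s : ℝ => h (s • x) := hh.1.comp (contDiff_id.smul contDiff_const)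
  have hbdd₀ : ∃ C, ∀ t, |h (t • x)| ≤ C := hh.exists_abs_le.imp fun _ hC (t : ℝ) => hC _
  have hbdd₁ : ∃ C, ∀ t, |deriv (fun s : ℝ => h (s • x)) t| ≤ C := by
    rw [deriv_comp_smul hdiff]
    exact exists_forall_abs_sum_le _ fun j _ => exists_forall_abs_const_mul_le (x j)
      ((hh.exists_abs_pd_le one_le_two j).imp fun _ hC (t : ℝ) => hC _)
  have hbdd₂ : ∃ C, ∀ t, |deriv (deriv fun s : ℝ => h (s • x)) t| ≤ C := by
    rw [deriv_deriv_comp_smul hh.1]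
    exact exists_forall_abs_sum_le _ fun j _ => exists_forall_abs_sum_le _ fun k _ =>
      exists_forall_abs_const_mul_le (x j * x k)
        ((hh.exists_abs_pd_pd_le le_rfl j k).imp fun _ hC (t : ℝ) => hC _)
  have key := hτ.2.2.2 _ ⟨hray, hbdd₀, hbdd₁, hbdd₂⟩
  rwa [deriv_deriv_comp_smul hh.1, deriv_comp_smul hdiff] at key

theorem ProbabilityTheory.IndepFun.integral_comp_prodMk {Ω α β E : Type*} [MeasurableSpace Ω]
    [MeasurableSpace α] [MeasurableSpace β] [NormedAddCommGroup E] [NormedSpace ℝ E] {μ : Measure Ω}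
    [IsFiniteMeasure μ] {Y : Ω → α} {X : Ω → β} (hYX : IndepFun Y X μ) (hY : Measurable Y)
    (hX : Measurable X) {φ : α × β → E} (hφ : StronglyMeasurable φ)
    (hint : Integrable (fun ω => φ (Y ω, X ω)) μ) :
    ∫ ω, φ (Y ω, X ω) ∂μ = ∫ x, ∫ ω, φ (Y ω, x) ∂μ ∂μ.map X := by
  have hlaw := (indepFun_iff_map_prod_eq_prod_map_map hY.aemeasurable hX.aemeasurable).mp hYX
  have hYXm : Measurable fun ω => (Y ω, X ω) := hY.prodMk hX
  have hint' : Integrable φ ((μ.map Y).prod (μ.map X)) := by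
    rw [← hlaw]
    exact (integrable_map_measure hφ.aestronglyMeasurable hYXm.aemeasurable).mpr hint
  rw [← integral_map hYXm.aemeasurable hφ.aestronglyMeasurable, hlaw, integral_prod_symm φ hint']
  refine integral_congr_ae (ae_of_all _ fun x => integral_map hY.aemeasurable ?_)
  exact (hφ.comp_measurable (measurable_id.prodMk measurable_const)).aestronglyMeasurable

theorem integral_sum_pd_eq_of_indepFun {Ω : Type*} [MeasurableSpace Ω] {μ : Measure Ω}
    [IsFiniteMeasure μ] {d : ℕ} {X : Ω → Fin d → ℝ} {ε : Ω → ℝ} {τ : ℝ → ℝ}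
    (hXm : Measurable X) (hεm : Measurable ε) (hcent : ∫ ω, ε ω ∂μ = 0)
    (hindep : IndepFun ε X μ) (hτ : IsSteinKernel1 μ ε τ)
    (hεX : ∀ j, Integrable (fun ω => ε ω * X ω j) μ)
    (hT : ∀ j k, Integrable (fun ω => τ (ε ω) * (X ω j * X ω k)) μ)
    {h : (Fin d → ℝ) → ℝ} (hh : Cb 2 h) :
    ∫ ω, ∑ j, (ε ω * X ω j - ∫ ω', ε ω' * X ω' j ∂μ) * pd j h (fun j' => ε ω * X ω j') ∂μ
      = ∫ ω, ∑ j, ∑ k,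
          τ (ε ω) * (X ω j * X ω k) * pd k (pd j h) (fun j' => ε ω * X ω j') ∂μ := by
  have hτm := hτ.1
  have hmean (j : Fin d) : ∫ ω, ε ω * X ω j ∂μ = 0 := by
    have := (hindep.comp measurable_id (measurable_pi_apply j)).integral_mul_eq_mul_integral
      hεm.aestronglyMeasurable ((measurable_pi_apply j).comp hXm).aestronglyMeasurable
    simpa [hcent] using this
  have hpd (j : Fin d) : Continuous (pd j h) := (contDiff_pd (n := 1) hh.1 j).continuous
  have hpdpd := continuous_pd_pd hh.1
  let φ₁ : ℝ × (Fin d → ℝ) → ℝ := fun p => p.1 * ∑ j, p.2 j * pd j h (p.1 • p.2)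
  let φ₂ : ℝ × (Fin d → ℝ) → ℝ :=
    fun p => τ p.1 * ∑ j, ∑ k, p.2 j * p.2 k * pd k (pd j h) (p.1 • p.2)
  have hφ₁m : StronglyMeasurable φ₁ := by fun_prop
  have hφ₂m : StronglyMeasurable φ₂ := by fun_prop
  have hφ₁ : Integrable (fun ω => φ₁ (ε ω, X ω)) μ := by
    refine (integrable_finsetSum Finset.univ fun j _ =>
      (hεX j).mul_comp_of_abs_le (hεm.smul hXm) (hpd j).measurable
        (hh.exists_abs_pd_le one_le_two j).choose_spec).congr (ae_of_all _ fun ω => ?_)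
    simp [φ₁, Finset.mul_sum, mul_assoc]
  have hφ₂ : Integrable (fun ω => φ₂ (ε ω, X ω)) μ := by
    refine (integrable_finsetSum Finset.univ fun j _ =>
      integrable_finsetSum Finset.univ fun k _ =>
      (hT j k).mul_comp_of_abs_le (hεm.smul hXm) (hpdpd j k).measurable
        (hh.exists_abs_pd_pd_le le_rfl j k).choose_spec).congr (ae_of_all _ fun ω => ?_)
    simp [φ₂, Finset.mul_sum, mul_assoc]
  calc _ = ∫ ω, φ₁ (ε ω, X ω) ∂μ := by
        refine integral_congr_ae (ae_of_all _ fun ω => ?_)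
        simp [φ₁, hmean, Finset.mul_sum, mul_assoc, Pi.smul_def]
    _ = ∫ x, ∫ ω, φ₁ (ε ω, x) ∂μ ∂μ.map X := hindep.integral_comp_prodMk hεm hXm hφ₁m hφ₁
    _ = ∫ x, ∫ ω, φ₂ (ε ω, x) ∂μ ∂μ.map X := by
        congr 1; funext x
        simpa [hcent] using hτ.integral_mul_sum_pd_smul hh x
    _ = ∫ ω, φ₂ (ε ω, X ω) ∂μ := (hindep.integral_comp_prodMk hεm hXm hφ₂m hφ₂).symm
    _ = _ := by
        refine integral_congr_ae (ae_of_all _ fun ω => ?_)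
        simp [φ₂, Finset.mul_sum, mul_assoc, Pi.smul_def]

lemma MeasureTheory.integral_mul_eq_integral_condExp_mul {Ω : Type*} {m mΩ : MeasurableSpace Ω}
    {μ : Measure Ω} [IsFiniteMeasure μ] (hm : m ≤ mΩ) {f g : Ω → ℝ} (hf : Integrable f μ)
    (hg : StronglyMeasurable[m] g) {C : ℝ} (hgC : ∀ ω, |g ω| ≤ C) :
    ∫ ω, f ω * g ω ∂μ = ∫ ω, μ[f | m] ω * g ω ∂μ := by
  have hfg : Integrable (f * g) μ :=
    hf.mul_bdd (hg.mono hm).aestronglyMeasurable (ae_of_all _ hgC)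
  calc ∫ ω, f ω * g ω ∂μ = ∫ ω, μ[f * g | m] ω ∂μ := (integral_condExp hm).symm
    _ = ∫ ω, μ[f | m] ω * g ω ∂μ :=
      integral_congr_ae (condExp_mul_of_stronglyMeasurable_right hg hfg hf)

lemma MeasureTheory.integral_sum_sum_congr {Ω ι κ : Type*} [MeasurableSpace Ω] {μ : Measure Ω}
    [Fintype ι] [Fintype κ] {F G : ι → κ → Ω → ℝ} (hF : ∀ j k, Integrable (F j k) μ)
    (hG : ∀ j k, Integrable (G j k) μ) (hFG : ∀ j k, ∫ ω, F j k ω ∂μ = ∫ ω, G j k ω ∂μ) :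
    ∫ ω, ∑ j, ∑ k, F j k ω ∂μ = ∫ ω, ∑ j, ∑ k, G j k ω ∂μ := by
  rw [integral_finsetSum _ fun j _ => integrable_finsetSum Finset.univ fun k _ => hF j k,
    integral_finsetSum _ fun j _ => integrable_finsetSum Finset.univ fun k _ => hG j k]
  refine Finset.sum_congr rfl fun j _ => ?_
  rw [integral_finsetSum _ fun k _ => hF j k, integral_finsetSum _ fun k _ => hG j k]
  exact Finset.sum_congr rfl fun k _ => hFG j k

section CondMatrix

variable {Ω E ι κ : Type*} [MeasurableSpace Ω] [MeasurableSpace E] [Fintype ι] [Fintype κ]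
  {μ : Measure Ω} [IsFiniteMeasure μ] {η : Ω → E} {T : Ω → ι → κ → ℝ}

/-- A version of `x ↦ E[T | η = x]`, computed entrywise against a regular conditional
distribution of `T` given `η`. -/
def condMatrix (μ : Measure Ω) [IsFiniteMeasure μ] (η : Ω → E) (T : Ω → ι → κ → ℝ) :
    E → ι → κ → ℝ :=
  fun x j k => ∫ M, M j k ∂condDistrib T η μ x

lemma measurable_condMatrix : Measurable (condMatrix μ η T) :=
  measurable_pi_lambda _ fun j => measurable_pi_lambda _ fun k =>
    ((continuous_apply k).comp (continuous_apply j)).stronglyMeasurable.integral_kernel.measurable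

lemma condExp_ae_eq_condMatrix (hη : Measurable η) (hT : AEMeasurable T μ) {j : ι} {k : κ}
    (hTjk : Integrable (fun ω => T ω j k) μ) :
    μ[fun ω => T ω j k | MeasurableSpace.comap η inferInstance]
      =ᵐ[μ] fun ω => condMatrix μ η T (η ω) j k :=
  condExp_ae_eq_integral_condDistrib (f := fun M : ι → κ → ℝ => M j k) hη hT
    ((continuous_apply k).comp (continuous_apply j)).stronglyMeasurable hTjk

lemma integrable_condMatrix_comp_apply (hη : Measurable η) (hT : AEMeasurable T μ) {j : ι}
    {k : κ} (hTjk : Integrable (fun ω => T ω j k) μ) :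
    Integrable (fun ω => condMatrix μ η T (η ω) j k) μ :=
  integrable_condExp.congr (condExp_ae_eq_condMatrix hη hT hTjk)

lemma integrable_condMatrix_comp (hη : Measurable η) (hT : AEMeasurable T μ)
    (hTint : ∀ j k, Integrable (fun ω => T ω j k) μ) :
    Integrable (fun ω => condMatrix μ η T (η ω)) μ :=
  integrable_pi_iff.mpr fun j => integrable_pi_iff.mpr fun k =>
    integrable_condMatrix_comp_apply hη hT (hTint j k)

lemma integral_sum_sum_mul_comp_eq_condMatrix (hη : Measurable η) (hT : AEMeasurable T μ)
    (hTint : ∀ j k, Integrable (fun ω => T ω j k) μ) {g : ι → κ → E → ℝ}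
    (hg : ∀ j k, Measurable (g j k)) (hgC : ∀ j k, ∃ C, ∀ x, |g j k x| ≤ C) :
    ∫ ω, ∑ j, ∑ k, T ω j k * g j k (η ω) ∂μ
      = ∫ ω, ∑ j, ∑ k, condMatrix μ η T (η ω) j k * g j k (η ω) ∂μ := by
  refine integral_sum_sum_congr
    (fun j k => (hTint j k).mul_comp_of_abs_le hη (hg j k) (hgC j k).choose_spec)
    (fun j k => (integrable_condMatrix_comp_apply hη hT (hTint j k)).mul_comp_of_abs_le hη
      (hg j k) (hgC j k).choose_spec) fun j k => ?_
  rw [integral_mul_eq_integral_condExp_mul (g := fun ω => g j k (η ω)) hη.comap_le (hTint j k)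
    ((hg j k).comp (comap_measurable η)).stronglyMeasurable (fun ω => (hgC j k).choose_spec _)]
  exact integral_congr_ae
    ((condExp_ae_eq_condMatrix hη hT (hTint j k)).mul Filter.EventuallyEq.rfl)

end CondMatrix

/-- Multiplicative perturbation: if `ε` is centered, independent of `X`, and has Stein
kernel `τ`, then `εX` has Stein kernel `x ↦ E[τ(ε) X^{⊗2} | εX = x]`. -/
theorem stmt4 {Ω : Type*} [MeasurableSpace Ω] (μ : Measure Ω) [IsProbabilityMeasure μ]
    {d : ℕ} (X : Ω → Fin d → ℝ) (ε : Ω → ℝ) (hXm : Measurable X) (hεm : Measurable ε)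
    (hcent : ∫ ω, ε ω ∂μ = 0) (hindep : IndepFun ε X μ)
    (τ : ℝ → ℝ) (hτ : IsSteinKernel1 μ ε τ)
    (hint1 : Integrable (fun ω => ‖(fun j : Fin d => ε ω * X ω j)‖) μ)
    (hint2 : Integrable
      (fun ω => ‖(fun p : Fin d × Fin d => τ (ε ω) * (X ω p.1 * X ω p.2))‖) μ) :
    ∃ τ' : (Fin d → ℝ) → Fin d → Fin d → ℝ,
      IsSteinKernel μ (fun ω j => ε ω * X ω j) τ' ∧
      ∀ j k, (fun ω => τ' (fun j' => ε ω * X ω j') j k)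
        =ᵐ[μ] μ[(fun ω => τ (ε ω) * (X ω j * X ω k)) |
            MeasurableSpace.comap (fun ω j' => ε ω * X ω j') inferInstance] := by
  have hτm := hτ.1
  let η : Ω → Fin d → ℝ := fun ω j => ε ω * X ω j
  let T : Ω → Fin d → Fin d → ℝ := fun ω j k => τ (ε ω) * (X ω j * X ω k)
  have hηm : Measurable η := by fun_prop
  have hTm : AEMeasurable T μ := by fun_prop
  have hηint : ∀ j, Integrable (fun ω => η ω j) μ :=
    integrable_pi_iff.mp ((integrable_norm_iff hηm.aestronglyMeasurable).mp hint1)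
  have hTint : ∀ j k, Integrable (fun ω => T ω j k) μ := fun j k =>
    integrable_pi_iff.mp ((integrable_norm_iff
      (measurable_pi_lambda _ fun _ => by fun_prop).aestronglyMeasurable).mp hint2)
      (j, k)
  refine ⟨condMatrix μ η T, ⟨measurable_condMatrix, hint1,
    (integrable_condMatrix_comp hηm hTm hTint).norm, fun h hh => ?_⟩,
    fun j k => (condExp_ae_eq_condMatrix hηm hTm (hTint j k)).symm⟩
  exact (integral_sum_pd_eq_of_indepFun hXm hεm hcent hindep hτ hηint hTint hh).trans
    (integral_sum_sum_mul_comp_eq_condMatrix hηm hTm hTint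
      (fun j k => (continuous_pd_pd hh.1 j k).measurable)
      (fun j k => hh.exists_abs_pd_pd_le le_rfl j k))
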